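/- arXiv:math/0502563 — 2 statements merged into one kernel-verified Lean document; each statement's English description precedes it below -/
import Mathlib

section
/- Let (W,S) be a Coxeter system with Coxeter matrix m. Any word in the alphabet S can be transformed into any reduced word representing the same element of W by a finite sequence of moves of the following two forms: (a) deleting a subword of the form ss for some s ∈ S, and (b) replacing an alternating subword stst… of length m_{st} by the alternating subword tsts… of the same length m_{st} (for s,t ∈ S with m_{st} < ∞). -/
/-!
The geometric representation, in which `σ_i σ_j` acts on the plane of `e_i, e_j` as the rotation
by `2π / M i j`, shows that `s_i s_j` has order exactly `M i j`. The parity of the number of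
occurrences of a reflection `t` in the right inversion sequence of a word depends only on the
element it represents (it is a cocycle of a `W`-action on `W × ℤˣ`), which gives the exchange
condition. Together these show that an element with two left descents `a ≠ b` has a reduced word
beginning with the braid word of `a` and `b`, and induction on the length gives Matsumoto's
theorem: reduced words of the same element are related by braid moves. For an arbitrary word
`a :: ω`, first reduce `ω` by induction; if `a` followed by that reduced word is not reduced, then
`a` is a left descent, braid moves create a factor `a a`, and deleting it gives a reduced word.
-/

/-- A single Tits move on words in the alphabet `B`: either (a) deleting a subword of the form
`ss`, or (b) replacing an alternating subword `stst…` of length `M s t < ∞` by the alternating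
subword `tsts…` of the same length. (In a `CoxeterMatrix`, the entry `0` encodes `∞`.) -/
def TitsMove {B : Type*} (M : CoxeterMatrix B) (ω ω' : List B) : Prop :=
  (∃ (l₁ l₂ : List B) (s : B), ω = l₁ ++ [s, s] ++ l₂ ∧ ω' = l₁ ++ l₂) ∨
  (∃ (l₁ l₂ : List B) (s t : B), s ≠ t ∧ M s t ≠ 0 ∧
    ω = l₁ ++ CoxeterSystem.alternatingWord s t (M s t) ++ l₂ ∧
    ω' = l₁ ++ CoxeterSystem.alternatingWord t s (M s t) ++ l₂)

def BraidMove {B : Type*} (M : CoxeterMatrix B) (ω ω' : List B) : Prop :=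
  ∃ (l₁ l₂ : List B) (a b : B), a ≠ b ∧ M a b ≠ 0 ∧
    ω = l₁ ++ CoxeterSystem.alternatingWord a b (M a b) ++ l₂ ∧
    ω' = l₁ ++ CoxeterSystem.alternatingWord b a (M a b) ++ l₂

theorem BraidMove.symm {B : Type*} {M : CoxeterMatrix B} {ω ω' : List B} (h : BraidMove M ω ω') :
    BraidMove M ω' ω := by
  obtain ⟨l₁, l₂, a, b, hab, h0, rfl, rfl⟩ := h
  exact ⟨l₁, l₂, b, a, hab.symm, M.symmetric a b ▸ h0, by rw [M.symmetric], by rw [M.symmetric]⟩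

theorem BraidMove.cons {B : Type*} {M : CoxeterMatrix B} (c : B) {ω ω' : List B}
    (h : BraidMove M ω ω') : BraidMove M (c :: ω) (c :: ω') := by
  obtain ⟨l₁, l₂, a, b, hab, h0, rfl, rfl⟩ := h
  exact ⟨c :: l₁, l₂, a, b, hab, h0, rfl, rfl⟩

theorem TitsMove.cons {B : Type*} {M : CoxeterMatrix B} (c : B) {ω ω' : List B}
    (h : TitsMove M ω ω') : TitsMove M (c :: ω) (c :: ω') := by
  rcases h with ⟨l₁, l₂, a, rfl, rfl⟩ | h
  · exact .inl ⟨c :: l₁, l₂, a, rfl, rfl⟩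
  · exact .inr (BraidMove.cons c h)

theorem Module.End.pow_apply_of_apply_eq_mul {R K V : Type*} [CommSemiring R] [Semiring K]
    [Algebra R K] [AddCommMonoid V] [Module R V] {T : Module.End R V} {ι : K →ₗ[R] V} {ζ : K}
    (hT : ∀ z, T (ι z) = ι (ζ * z)) (k : ℕ) (z : K) : (T ^ k) (ι z) = ι (ζ ^ k * z) := by
  induction k generalizing z with
  | zero => simp
  | succ k ih => rw [pow_succ, Module.End.mul_apply, hT, ih, pow_succ, mul_assoc]

theorem Module.End.pow_eq_one_of_apply_eq_root_mul {R K V : Type*} [CommRing R] [CommRing K]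
    [IsDomain K] [Algebra R K] [AddCommGroup V] [Module R V] {T : Module.End R V}
    {ι : K →ₗ[R] V} {ζ : K} {m : ℕ} (hζ : IsPrimitiveRoot ζ m) (hm : 1 < m)
    (hT : ∀ z, T (ι z) = ι (ζ * z)) (hrange : ∀ v, T v - v ∈ LinearMap.range ι) : T ^ m = 1 := by
  refine LinearMap.ext fun v => ?_
  obtain ⟨z, hz⟩ := hrange v
  have hv : (T ^ m - 1) v = 0 := by
    rw [← geom_sum_mul, Module.End.mul_apply, LinearMap.sub_apply, Module.End.one_apply, ← hz,
      LinearMap.sum_apply]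
    simp_rw [Module.End.pow_apply_of_apply_eq_mul hT, ← map_sum, ← Finset.sum_mul,
      hζ.geom_sum_eq_zero hm, zero_mul, map_zero]
  rwa [LinearMap.sub_apply, sub_eq_zero] at hv

namespace CoxeterMatrix

variable {B : Type*} (M : CoxeterMatrix B)

/-- `v ↦ ⟨e_i, v⟩` for the form `⟨e_i, e_j⟩ = -cos (π / M i j)`. For `M i j = 0`, that is `∞`,
the junk value `π / 0 = 0` gives the correct entry `-1`. -/
noncomputable def geomForm (i : B) : (B →₀ ℝ) →ₗ[ℝ] ℝ :=
  Finsupp.linearCombination ℝ fun j => -Real.cos (Real.pi / M i j)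

noncomputable def geomReflection (i : B) : Module.End ℝ (B →₀ ℝ) :=
  1 - (2 • M.geomForm i).smulRight (Finsupp.single i 1)

@[simp] theorem geomForm_single (i j : B) (r : ℝ) :
    M.geomForm i (Finsupp.single j r) = -(r * Real.cos (Real.pi / M i j)) := by
  simp [geomForm]

@[simp] theorem geomForm_single_self (i : B) (r : ℝ) : M.geomForm i (Finsupp.single i r) = r := by
  simp

theorem geomReflection_apply (i : B) (v : B →₀ ℝ) :
    M.geomReflection i v = v - (2 * M.geomForm i v) • Finsupp.single i 1 := by
  simp [geomReflection, mul_smul]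

theorem geomReflection_mul_self (i : B) : M.geomReflection i * M.geomReflection i = 1 := by
  refine LinearMap.ext fun v => ?_
  simp only [Module.End.mul_apply, geomReflection_apply, map_sub, map_smul, geomForm_single_self,
    Module.End.one_apply]
  module

/-- Real-linear parametrisation of the plane spanned by `e_i` and `e_j`, chosen so that
`σ_i σ_j` acts on it as multiplication by `exp (2πi / M i j)`. -/
noncomputable def dihedralPlane (i j : B) : ℂ →ₗ[ℝ] B →₀ ℝ :=
  Complex.reLm.smulRight (Real.sin (Real.pi / M i j) • Finsupp.single i 1) +
    Complex.imLm.smulRight (Real.cos (Real.pi / M i j) • Finsupp.single i 1 + Finsupp.single j 1)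

theorem dihedralPlane_apply (i j : B) (z : ℂ) : M.dihedralPlane i j z =
    (z.re * Real.sin (Real.pi / M i j) + z.im * Real.cos (Real.pi / M i j)) • Finsupp.single i 1
      + z.im • Finsupp.single j 1 := by
  simp only [dihedralPlane, LinearMap.add_apply, LinearMap.smulRight_apply, Complex.reLm_coe,
    Complex.imLm_coe]
  module

theorem geomReflection_mul_dihedralPlane (i j : B) (z : ℂ) :
    (M.geomReflection i * M.geomReflection j) (M.dihedralPlane i j z) =
      M.dihedralPlane i j (Complex.exp (2 * Real.pi * Complex.I / M i j) * z) := by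
  have hζ : Complex.exp (2 * Real.pi * Complex.I / M i j) =
      ⟨Real.cos (2 * (Real.pi / M i j)), Real.sin (2 * (Real.pi / M i j))⟩ := by
    rw [show 2 * Real.pi * Complex.I / M i j = ((2 * (Real.pi / M i j) : ℝ) : ℂ) * Complex.I by
      push_cast; ring]
    exact Complex.ext (Complex.exp_ofReal_mul_I_re _) (Complex.exp_ofReal_mul_I_im _)
  rw [hζ, Real.cos_two_mul, Real.sin_two_mul]
  simp only [Module.End.mul_apply, dihedralPlane_apply, geomReflection_apply, map_add, map_sub,
    map_smul, geomForm_single, M.diagonal, Nat.cast_one, div_one, Real.cos_pi, Complex.mul_re,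
    Complex.mul_im, M.symmetric j i]
  have hsc := Real.sin_sq_add_cos_sq (Real.pi / M i j)
  match_scalars
  · linear_combination 2 * z.im * Real.cos (Real.pi / M i j) * hsc
  · ring

variable {M} {i j : B}

theorem sin_pi_div_pos (hij : i ≠ j) (h0 : M i j ≠ 0) : 0 < Real.sin (Real.pi / M i j) := by
  have h2 : (2 : ℝ) ≤ M i j := by
    have := M.off_diagonal i j hij
    exact_mod_cast (by omega : 2 ≤ M i j)
  apply Real.sin_pos_of_pos_of_lt_pi (by positivity)
  rw [div_lt_iff₀ (by linarith)]
  nlinarith [Real.pi_pos]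

theorem single_mem_range_dihedralPlane (hij : i ≠ j) (h0 : M i j ≠ 0) :
    Finsupp.single i 1 ∈ LinearMap.range (M.dihedralPlane i j) ∧
      Finsupp.single j 1 ∈ LinearMap.range (M.dihedralPlane i j) := by
  have hs := (sin_pi_div_pos hij h0).ne'
  have hi : Finsupp.single i 1 ∈ LinearMap.range (M.dihedralPlane i j) :=
    ⟨((Real.sin (Real.pi / M i j))⁻¹ : ℝ), by
      rw [dihedralPlane_apply, Complex.ofReal_re, Complex.ofReal_im, zero_mul, add_zero, zero_smul,
        add_zero, inv_mul_cancel₀ hs, one_smul]⟩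
  refine ⟨hi, ?_⟩
  have hI : M.dihedralPlane i j Complex.I - Real.cos (Real.pi / M i j) • Finsupp.single i 1 =
      Finsupp.single j 1 := by
    simp [dihedralPlane_apply]
  rw [← hI]
  exact sub_mem (LinearMap.mem_range_self _ _) (Submodule.smul_mem _ _ hi)

theorem geomReflection_mul_apply_sub_mem_range (hij : i ≠ j) (h0 : M i j ≠ 0) (v : B →₀ ℝ) :
    (M.geomReflection i * M.geomReflection j) v - v ∈ LinearMap.range (M.dihedralPlane i j) := by
  obtain ⟨hi, hj⟩ := single_mem_range_dihedralPlane hij h0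
  have hv : (M.geomReflection i * M.geomReflection j) v - v =
      (-(2 * M.geomForm i (M.geomReflection j v))) • Finsupp.single i 1 +
        (-(2 * M.geomForm j v)) • Finsupp.single j 1 := by
    rw [Module.End.mul_apply, geomReflection_apply, M.geomReflection_apply j]
    module
  rw [hv]
  exact add_mem (Submodule.smul_mem _ _ hi) (Submodule.smul_mem _ _ hj)

theorem dihedralPlane_injective (hij : i ≠ j) (h0 : M i j ≠ 0) :
    Function.Injective (M.dihedralPlane i j) := by
  refine (injective_iff_map_eq_zero _).mpr fun z hz => ?_
  have him := congrArg (· j) hz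
  have hre := congrArg (· i) hz
  simp [dihedralPlane_apply, hij, hij.symm] at him hre
  simp [Complex.ext_iff, him, (sin_pi_div_pos hij h0).ne'] at hre ⊢
  exact hre

theorem geomReflection_mul_pow_single_of_eq_zero (h0 : M i j = 0) (d : ℕ) :
    ((M.geomReflection i * M.geomReflection j) ^ d) (Finsupp.single i 1) =
      Finsupp.single i 1 + (2 * d : ℝ) • (Finsupp.single i 1 + Finsupp.single j 1) := by
  induction d with
  | zero => simp
  | succ d ih =>
    rw [pow_succ', Module.End.mul_apply, ih]
    simp only [Module.End.mul_apply, geomReflection_apply, map_add, map_sub, map_smul,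
      geomForm_single, M.diagonal, M.symmetric j i, h0, Nat.cast_one, Nat.cast_zero, div_one,
      div_zero, Real.cos_pi, Real.cos_zero]
    push_cast
    module

theorem orderOf_geomReflection_mul (i j : B) :
    orderOf (M.geomReflection i * M.geomReflection j) = M i j := by
  rcases eq_or_ne i j with rfl | hij
  · simp [geomReflection_mul_self]
  rcases eq_or_ne (M i j) 0 with h0 | h0
  · rw [h0, orderOf_eq_zero_iff']
    intro d hd hpow
    have := congrArg (· j) (geomReflection_mul_pow_single_of_eq_zero h0 d)
    simp [hpow, hij, hd.ne'] at this
  have hζ := Complex.isPrimitiveRoot_exp (M i j) h0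
  have hT := M.geomReflection_mul_dihedralPlane i j
  refine (orderOf_eq_iff (Nat.pos_of_ne_zero h0)).mpr ⟨?_, fun d hd hd0 hpow => ?_⟩
  · exact Module.End.pow_eq_one_of_apply_eq_root_mul hζ
      (by have := M.off_diagonal i j hij; omega) hT (geomReflection_mul_apply_sub_mem_range hij h0)
  · have h1 := Module.End.pow_apply_of_apply_eq_mul hT d 1
    rw [hpow, Module.End.one_apply, mul_one] at h1
    exact hζ.pow_ne_one_of_pos_of_lt hd0.ne' hd (dihedralPlane_injective hij h0 h1).symm

theorem isLiftable_geomReflection : M.IsLiftable M.geomReflection := fun i j => by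
  rw [← M.orderOf_geomReflection_mul i j]
  exact pow_orderOf_eq_one _

end CoxeterMatrix

open List

namespace CoxeterSystem

variable {B W : Type*} [Group W] {M : CoxeterMatrix B} (cs : CoxeterSystem M W)

local prefix:100 "s" => cs.simple
local prefix:100 "π" => cs.wordProd
local prefix:100 "ℓ" => cs.length
local prefix:100 "ris " => cs.rightInvSeq
local prefix:100 "lis " => cs.leftInvSeq

theorem orderOf_simple_mul_simple (i j : B) : orderOf (s i * s j) = M i j := by
  refine Nat.dvd_antisymm (orderOf_dvd_of_pow_eq_one (cs.simple_mul_simple_pow i j)) ?_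
  have := orderOf_map_dvd (cs.lift ⟨_, M.isLiftable_geomReflection⟩) (s i * s j)
  rwa [map_mul, cs.lift_apply_simple, cs.lift_apply_simple, M.orderOf_geomReflection_mul] at this

theorem prod_map_alternatingWord_two_mul {G : Type*} [Monoid G] (f : B → G) (i j : B) (m : ℕ) :
    ((alternatingWord i j (2 * m)).map f).prod = (f i * f j) ^ m := by
  induction m with
  | zero => simp [alternatingWord]
  | succ m ih =>
    rw [Nat.mul_succ, alternatingWord_succ', alternatingWord_succ']
    simp [parity_simps, ih, pow_succ', mul_assoc]

theorem wordProd_alternatingWord_two_mul (i j : B) : π (alternatingWord i j (2 * M i j)) = 1 := by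
  rw [wordProd, prod_map_alternatingWord_two_mul, cs.simple_mul_simple_pow]

theorem reverse_rightInvSeq_alternatingWord (i j : B) (K : ℕ) :
    (ris (alternatingWord i j K)).reverse = (range K).map fun p => (s j * s i) ^ p * s j := by
  induction K generalizing i j with
  | zero => simp [alternatingWord]
  | succ K ih =>
    rw [alternatingWord_succ, rightInvSeq_concat, concat_eq_append, reverse_concat', ← map_reverse,
      ih, range_succ_eq_map, map_map, map_cons, map_map, pow_zero, one_mul]
    refine congrArg _ (map_congr_left fun p _ => ?_)
    simp only [Function.comp_apply, MulAut.conj_apply, inv_simple, Nat.succ_eq_add_one]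
    rw [pow_succ', mul_assoc, mul_pow_mul]
    simp only [mul_assoc]

theorem even_count_rightInvSeq_alternatingWord [DecidableEq W] (i j : B) (t : W) :
    Even ((ris (alternatingWord i j (2 * M i j))).count t) := by
  rw [← count_reverse, reverse_rightInvSeq_alternatingWord, two_mul, range_add, map_append,
    map_map, count_append]
  have hperiod : ((fun p => (s j * s i) ^ p * s j) ∘ fun p => M i j + p) =
      fun p => (s j * s i) ^ p * s j := by
    funext p
    simp [pow_add, cs.simple_mul_simple_pow']
  rw [hperiod]
  exact ⟨_, rfl⟩

section ReflectionSign

variable [DecidableEq W]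

def reflectionSign (ω : List B) (t : W) : ℤˣ := (-1) ^ (ris ω).count t

def reflectionAction (i : B) : Function.End (W × ℤˣ) :=
  fun p => (s i * p.1 * s i, if p.1 = s i then -p.2 else p.2)

theorem prod_map_reflectionAction_apply (ω : List B) (p : W × ℤˣ) :
    (ω.map cs.reflectionAction).prod p =
      (π ω * p.1 * (π ω)⁻¹, cs.reflectionSign ω p.1 * p.2) := by
  induction ω generalizing p with
  | nil =>
    show p = _
    simp [reflectionSign]
  | cons i ω ih =>
    change cs.reflectionAction i ((ω.map cs.reflectionAction).prod p) = _
    have hconj : π ω * p.1 * (π ω)⁻¹ = s i ↔ (π ω)⁻¹ * s i * π ω = p.1 := by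
      constructor <;> intro h <;> rw [← h] <;> group
    rw [ih, reflectionAction, reflectionSign, reflectionSign, rightInvSeq, count_cons,
      wordProd_cons]
    ext
    · simp [mul_assoc]
    · by_cases h : π ω * p.1 * (π ω)⁻¹ = s i
      · simp [h, hconj.mp h, pow_succ]
      · simp [h, hconj.not.mp h]

theorem isLiftable_reflectionAction : M.IsLiftable cs.reflectionAction := fun i j => by
  rw [← prod_map_alternatingWord_two_mul]
  funext p
  rw [prod_map_reflectionAction_apply, wordProd_alternatingWord_two_mul, reflectionSign,
    (cs.even_count_rightInvSeq_alternatingWord i j p.1).neg_one_pow]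
  show _ = p
  simp

theorem reflectionSign_eq_of_wordProd_eq {ω₁ ω₂ : List B} (h : π ω₁ = π ω₂) (t : W) :
    cs.reflectionSign ω₁ t = cs.reflectionSign ω₂ t := by
  have hlift (ω : List B) :
      cs.lift ⟨_, cs.isLiftable_reflectionAction⟩ (π ω) = (ω.map cs.reflectionAction).prod := by
    rw [wordProd, map_list_prod, map_map]
    exact congrArg prod (map_congr_left fun i _ => cs.lift_apply_simple _ i)
  have := congrArg (fun w => (cs.lift ⟨_, cs.isLiftable_reflectionAction⟩ w (t, 1)).2) h
  simpa [hlift, prod_map_reflectionAction_apply] using this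

end ReflectionSign

theorem simple_mem_rightInvSeq_of_isRightDescent {ω : List B} {i : B}
    (h : cs.IsRightDescent (π ω) i) : s i ∈ ris ω := by
  classical
  obtain ⟨κ, hκ, hκω⟩ := cs.exists_isReduced (π ω * s i)
  have hnot : s i ∉ ris κ := fun hmem => by
    have := (cs.isRightInversion_of_mem_rightInvSeq hκ hmem).2
    rw [← hκω, simple_mul_simple_cancel_right] at this
    exact h.not_gt this
  -- in the word `κ.concat i` for `π ω`, the reflection `s i` occurs exactly once
  have hsign : cs.reflectionSign (κ.concat i) (s i) = -1 := by
    have hcount := count_map_of_injective (ris κ) _ (MulAut.conj (s i)).injective (s i)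
    rw [show MulAut.conj (s i) (s i) = s i by simp, count_eq_zero_of_not_mem hnot] at hcount
    rw [reflectionSign, rightInvSeq_concat, count_concat_self, hcount, zero_add, pow_one]
  have hsign' : cs.reflectionSign ω (s i) = -1 := by
    rwa [← cs.reflectionSign_eq_of_wordProd_eq (by rw [wordProd_concat, ← hκω,
      simple_mul_simple_cancel_right])]
  by_contra hmem
  rw [reflectionSign, count_eq_zero_of_not_mem hmem, pow_zero] at hsign'
  exact absurd hsign' (by decide)

theorem simple_mem_leftInvSeq_of_isLeftDescent {ω : List B} {i : B}
    (h : cs.IsLeftDescent (π ω) i) : s i ∈ lis ω := by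
  have := cs.simple_mem_rightInvSeq_of_isRightDescent (ω := ω.reverse)
    (by rwa [wordProd_reverse, isRightDescent_inv_iff])
  rwa [rightInvSeq_reverse, mem_reverse] at this

theorem exists_simple_mul_wordProd_eq_eraseIdx {ω : List B} {i : B}
    (h : cs.IsLeftDescent (π ω) i) : ∃ q < ω.length, s i * π ω = π (ω.eraseIdx q) := by
  obtain ⟨q, hq, hget⟩ := mem_iff_getElem.mp (cs.simple_mem_leftInvSeq_of_isLeftDescent h)
  rw [length_leftInvSeq] at hq
  refine ⟨q, hq, ?_⟩
  have := cs.getD_leftInvSeq_mul_wordProd ω q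
  rwa [getD_eq_getElem _ 1 (by rwa [length_leftInvSeq]), hget] at this

theorem isLeftDescent_of_not_isReduced_cons {ω : List B} {i : B} (hω : cs.IsReduced ω)
    (h : ¬cs.IsReduced (i :: ω)) : cs.IsLeftDescent (π ω) i := by
  rcases cs.length_simple_mul (π ω) i with hlen | hlen
  · exact absurd (by rw [IsReduced, wordProd_cons, hlen, hω, length_cons]) h
  · rw [IsLeftDescent]
    omega

theorem isRightDescent_of_not_isReduced_concat {ω : List B} {i : B} (hω : cs.IsReduced ω)
    (h : ¬cs.IsReduced (ω.concat i)) : cs.IsRightDescent (π ω) i := by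
  rcases cs.length_mul_simple (π ω) i with hlen | hlen
  · exact absurd (by rw [IsReduced, wordProd_concat, hlen, hω, length_concat]) h
  · rw [IsRightDescent]
    omega

theorem IsReduced.length_eq {cs : CoxeterSystem M W} {ω₁ ω₂ : List B} (h₁ : cs.IsReduced ω₁)
    (h₂ : cs.IsReduced ω₂) (h : cs.wordProd ω₁ = cs.wordProd ω₂) : ω₁.length = ω₂.length := by
  rw [← h₁.eq, ← h₂.eq, h]

theorem isReduced_alternatingWord {i j : B} (hij : i ≠ j) {K : ℕ} (hK : M i j = 0 ∨ K ≤ M i j) :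
    cs.IsReduced (alternatingWord i j K) := by
  induction K generalizing i j with
  | zero => simp [IsReduced, alternatingWord]
  | succ K ih =>
    by_contra hnred
    have hred := ih hij.symm (by rw [M.symmetric j i]; omega)
    have hmem := cs.simple_mem_rightInvSeq_of_isRightDescent
      (cs.isRightDescent_of_not_isReduced_concat hred hnred)
    rw [← mem_reverse, reverse_rightInvSeq_alternatingWord] at hmem
    obtain ⟨p, hp, hpj⟩ := mem_map.mp hmem
    have hpow : (s i * s j) ^ (p + 1) = 1 := by
      rw [pow_succ, ← mul_assoc, hpj, simple_mul_simple_self]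
    have hdvd := orderOf_dvd_of_pow_eq_one hpow
    rw [orderOf_simple_mul_simple] at hdvd
    rw [mem_range] at hp
    rcases hK with h0 | hle
    · rw [h0, zero_dvd_iff] at hdvd
      omega
    · have := Nat.le_of_dvd (by omega) hdvd
      omega

theorem exists_isReduced_alternatingWord_append {w : W} {i j : B} (hij : i ≠ j)
    (hi : cs.IsLeftDescent w i) (hj : cs.IsLeftDescent w j) {k : ℕ} (hk : M i j = 0 ∨ k ≤ M i j) :
    ∃ γ, cs.IsReduced (alternatingWord i j k ++ γ) ∧ π (alternatingWord i j k ++ γ) = w := by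
  induction k with
  | zero =>
    obtain ⟨γ, hγ, rfl⟩ := cs.exists_isReduced w
    exact ⟨γ, by simpa [alternatingWord] using hγ, by simp [alternatingWord]⟩
  | succ k ih =>
    obtain ⟨γ, hred, hw⟩ := ih (by omega)
    obtain ⟨z, hz, hcons⟩ : ∃ z, cs.IsLeftDescent w z ∧
        alternatingWord i j (k + 1) = z :: alternatingWord i j k :=
      ⟨_, by split_ifs <;> assumption, alternatingWord_succ' i j k⟩
    rw [← hw] at hz
    obtain ⟨q, hq, herase⟩ := cs.exists_simple_mul_wordProd_eq_eraseIdx hz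
    rw [length_append, length_alternatingWord] at hq
    by_cases hqk : q < k
    · -- the exchange would shorten the reduced word `alternatingWord i j (k + 1)`
      exfalso
      rw [eraseIdx_append_of_lt_length (by rwa [length_alternatingWord]), wordProd_append,
        wordProd_append, ← mul_assoc] at herase
      have hlong := (cs.isReduced_alternatingWord hij hk).eq
      rw [hcons, wordProd_cons, mul_right_cancel herase, length_cons,
        length_alternatingWord] at hlong
      have hshort := cs.length_wordProd_le ((alternatingWord i j k).eraseIdx q)
      rw [length_eraseIdx_of_lt (by rwa [length_alternatingWord]), length_alternatingWord] at hshort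
      omega
    · rw [eraseIdx_append_of_length_le (by rw [length_alternatingWord]; omega),
        length_alternatingWord] at herase
      have hw' : π (alternatingWord i j (k + 1) ++ γ.eraseIdx (q - k)) = w := by
        rw [hcons, cons_append, wordProd_cons, ← herase, simple_mul_simple_cancel_left, hw]
      refine ⟨γ.eraseIdx (q - k), ?_, hw'⟩
      rw [IsReduced, hw', ← hw, hred.eq, length_append, length_append, length_alternatingWord,
        length_alternatingWord, length_eraseIdx_of_lt (by omega)]
      omega

theorem exists_isReduced_braidWord_append {w : W} {i j : B} (hij : i ≠ j)
    (hi : cs.IsLeftDescent w i) (hj : cs.IsLeftDescent w j) :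
    M i j ≠ 0 ∧ ∃ γ, cs.IsReduced (alternatingWord i j (M i j) ++ γ) ∧
      π (alternatingWord i j (M i j) ++ γ) = w := by
  refine ⟨fun h0 => ?_, cs.exists_isReduced_alternatingWord_append hij hi hj (.inr le_rfl)⟩
  obtain ⟨γ, hred, hw⟩ :=
    cs.exists_isReduced_alternatingWord_append hij hi hj (k := ℓ w + 1) (.inl h0)
  have := hred.eq
  rw [hw, length_append, length_alternatingWord] at this
  omega

theorem wordProd_alternatingWord_swap (i j : B) :
    π (alternatingWord j i (M i j)) = π (alternatingWord i j (M i j)) := by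
  have := cs.wordProd_braidWord_eq j i
  rwa [braidWord, braidWord, M.symmetric j i] at this

theorem alternatingWord_succ_eq_cons_or (i j : B) (m : ℕ) :
    (∃ u v, alternatingWord i j (m + 1) = i :: u ∧ alternatingWord j i (m + 1) = j :: v) ∨
      (∃ u v, alternatingWord i j (m + 1) = j :: u ∧ alternatingWord j i (m + 1) = i :: v) := by
  rw [alternatingWord_succ', alternatingWord_succ']
  by_cases h : Even m <;> simp [h]

theorem exists_braidMove_cons_cons {w : W} {a b : B} (hab : a ≠ b) (ha : cs.IsLeftDescent w a)
    (hb : cs.IsLeftDescent w b) : ∃ u v, cs.IsReduced (a :: u) ∧ π (a :: u) = w ∧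
      cs.IsReduced (b :: v) ∧ π (b :: v) = w ∧ BraidMove M (a :: u) (b :: v) := by
  obtain ⟨h0, γ, hred, hw⟩ := cs.exists_isReduced_braidWord_append hab ha hb
  have hw' : π (alternatingWord b a (M a b) ++ γ) = w := by
    rw [wordProd_append, wordProd_alternatingWord_swap, ← wordProd_append, hw]
  have hred' : cs.IsReduced (alternatingWord b a (M a b) ++ γ) := by
    rw [IsReduced, hw', ← hw, hred.eq, length_append, length_append, length_alternatingWord,
      length_alternatingWord]
  have hmove : BraidMove M (alternatingWord a b (M a b) ++ γ) (alternatingWord b a (M a b) ++ γ) :=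
    ⟨[], γ, a, b, hab, h0, rfl, rfl⟩
  obtain ⟨m, hm⟩ := Nat.exists_eq_add_one_of_ne_zero h0
  rw [hm] at hred hw hred' hw' hmove
  rcases alternatingWord_succ_eq_cons_or a b m with ⟨u, v, hu, hv⟩ | ⟨u, v, hu, hv⟩ <;>
    rw [hu, cons_append] at hred hw hmove <;> rw [hv, cons_append] at hred' hw' hmove
  · exact ⟨_, _, hred, hw, hred', hw', hmove⟩
  · exact ⟨_, _, hred', hw', hred, hw, hmove.symm⟩

theorem isLeftDescent_wordProd_cons {ω : List B} {i : B} (h : cs.IsReduced (i :: ω)) :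
    cs.IsLeftDescent (π (i :: ω)) i := by
  rw [IsLeftDescent, wordProd_cons, simple_mul_simple_cancel_left, ← wordProd_cons, h.eq,
    length_cons]
  exact Nat.lt_succ_of_le (cs.length_wordProd_le ω)

theorem reflTransGen_braidMove_of_isReduced {ω₁ ω₂ : List B} (h₁ : cs.IsReduced ω₁)
    (h₂ : cs.IsReduced ω₂) (h : π ω₁ = π ω₂) : Relation.ReflTransGen (BraidMove M) ω₁ ω₂ := by
  induction hn : ω₁.length generalizing ω₁ ω₂ with
  | zero =>
    rw [List.length_eq_zero_iff.mp hn,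
      List.length_eq_zero_iff.mp ((h₂.length_eq h₁ h.symm).trans hn)]
  | succ n ih =>
    have hcons {c : B} {u v : List B} (hu : cs.IsReduced (c :: u)) (hv : cs.IsReduced (c :: v))
        (huv : π (c :: u) = π (c :: v)) (hlen : u.length = n) :
        Relation.ReflTransGen (BraidMove M) (c :: u) (c :: v) := by
      rw [wordProd_cons, wordProd_cons, mul_right_inj] at huv
      exact Relation.ReflTransGen.lift (c :: ·) (fun _ _ => BraidMove.cons c) _ _
        (ih (ω₁ := u) (ω₂ := v) (hu.drop 1) (hv.drop 1) huv hlen)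
    obtain ⟨a, α, rfl⟩ := exists_cons_of_length_eq_add_one hn
    obtain ⟨b, β, rfl⟩ :=
      exists_cons_of_length_eq_add_one ((h₂.length_eq h₁ h.symm).trans hn)
    rw [length_cons, Nat.add_right_cancel_iff] at hn
    rcases eq_or_ne a b with rfl | hab
    · exact hcons h₁ h₂ h hn
    obtain ⟨u, v, hu, hwu, hv, hwv, hmove⟩ := cs.exists_braidMove_cons_cons hab
      (cs.isLeftDescent_wordProd_cons h₁) (h ▸ cs.isLeftDescent_wordProd_cons h₂)
    have hlen := h₁.length_eq hu hwu.symm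
    have hlen' := hv.length_eq hu (hwv.trans hwu.symm)
    simp only [length_cons, Nat.add_right_cancel_iff] at hlen hlen'
    exact ((hcons h₁ hu hwu.symm hn).tail hmove).trans (hcons hv h₂ (hwv.trans h) (by omega))

theorem exists_isReduced_cons_of_isLeftDescent {w : W} {i : B} (h : cs.IsLeftDescent w i) :
    ∃ ω, cs.IsReduced (i :: ω) ∧ π (i :: ω) = w := by
  obtain ⟨ω, hω, hωw⟩ := cs.exists_isReduced (s i * w)
  have hprod : π (i :: ω) = w := by rw [wordProd_cons, ← hωw, simple_mul_simple_cancel_left]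
  refine ⟨ω, ?_, hprod⟩
  rw [IsReduced, hprod, length_cons, ← hω, ← hωw, cs.isLeftDescent_iff.mp h]

end CoxeterSystem

/-- Tits' solution to the word problem: any word in the simple generators can be transformed into
any reduced word representing the same group element by a finite sequence of Tits moves. -/
theorem tits_word_problem {B W : Type*} [Group W] (M : CoxeterMatrix B)
    (cs : CoxeterSystem M W) (ω ω' : List B) (hred : cs.IsReduced ω')
    (hprod : cs.wordProd ω = cs.wordProd ω') :
    Relation.ReflTransGen (TitsMove M) ω ω' := by
  have braid {ω₁ ω₂ : List B} (h₁ : cs.IsReduced ω₁) (h₂ : cs.IsReduced ω₂)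
      (h : cs.wordProd ω₁ = cs.wordProd ω₂) : Relation.ReflTransGen (TitsMove M) ω₁ ω₂ :=
    Relation.ReflTransGen.mono (fun _ _ => Or.inr) _ _
      (cs.reflTransGen_braidMove_of_isReduced h₁ h₂ h)
  induction ω generalizing ω' with
  | nil => exact braid (by simp [CoxeterSystem.IsReduced]) hred hprod
  | cons a ω ih =>
    obtain ⟨τ, hτ, hτω⟩ := cs.exists_isReduced (cs.wordProd ω)
    have hstep : Relation.ReflTransGen (TitsMove M) (a :: ω) (a :: τ) :=
      Relation.ReflTransGen.lift (a :: ·) (fun _ _ => TitsMove.cons a) _ _ (ih τ hτ hτω)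
    rw [cs.wordProd_cons, hτω, ← cs.wordProd_cons] at hprod
    by_cases h : cs.IsReduced (a :: τ)
    · exact hstep.trans (braid h hred hprod)
    obtain ⟨τ', hτ', hτ'τ⟩ :=
      cs.exists_isReduced_cons_of_isLeftDescent (cs.isLeftDescent_of_not_isReduced_cons hτ h)
    have hcancel : TitsMove M (a :: a :: τ') τ' := .inl ⟨[], τ', a, rfl, rfl⟩
    have hτ'ω' : cs.wordProd τ' = cs.wordProd ω' := by
      rw [← hprod, cs.wordProd_cons, ← hτ'τ, cs.wordProd_cons, cs.simple_mul_simple_cancel_left]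
    exact hstep.trans <| ((Relation.ReflTransGen.lift (a :: ·) (fun _ _ => TitsMove.cons a) _ _
      (braid hτ hτ' hτ'τ.symm)).tail hcancel).trans (braid (hτ'.drop 1) hred hτ'ω')
end

section
/- Let (W,S) be a Coxeter system with S finite and Coxeter matrix m, and let T ⊆ S be such that for every t ∈ T and s ∈ S∖T the exponent m_{st} is even or ∞. Assume the standard parabolic subgroup W_{S∖T} is finite. Let φ : S → I be an allowable partition of S with φ⁻¹(x₀) = S∖T for a distinguished element x₀ ∈ I. Then for every function d : I∖{x₀} → ℕ, the set {w ∈ W : ℓ_{φ⁻¹(x)}(w) = d(x) for all x ∈ I∖{x₀}} is finite and its cardinality equals #W_{S∖T} times the cardinality of the set {u ∈ ker φ_T : ℓ_{φ⁻¹(x)}(u) = d(x) for all x ∈ I∖{x₀}}. -/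
/-! Tits' sign cocycle shows that two reduced words for the same element have the same set of
reflections in their inversion sequences; as the fibres of an allowable partition are unions of
conjugacy classes of generators, the number of letters from a fibre in a reduced word is an
invariant `ℓ_{S₀}(w)`. Right multiplication by a generator from `S ∖ T` leaves `ℓ_{p⁻¹(x)}`
unchanged for `x ≠ x₀`, so the set in question is a union of right cosets of `W_{S∖T}`, and since
`φ_T` retracts `W` onto `W_{S∖T}`, `w ↦ (φ_T w, w (φ_T w)⁻¹)` splits it as `W_{S∖T}` times its
intersection with `ker φ_T`. For finiteness, the letters of a reduced word between consecutive
`T`-letters form a reduced word of the finite group `W_{S∖T}`, which bounds the length by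
`#W_{S∖T} · (∑ d x + 1)`. -/

theorem List.countP_mem_eq_sum_countP {α β : Type*} [DecidableEq β] (f : α → β) (s : Finset β)
    (l : List α) : l.countP (fun a => f a ∈ s) = ∑ b ∈ s, l.countP (fun a => f a = b) := by
  induction l with
  | nil => simp
  | cons a l ih => simp [List.countP_cons, ih, Finset.sum_add_distrib]

/-- Writing `g = (g (φ g)⁻¹) (φ g)` splits `A` into `ker φ ∩ A` times `H`. -/
theorem MonoidHom.card_eq_card_mul_card_ker_inter {G : Type*} [Group G] (φ : G →* G)
    (H : Subgroup G) (hφH : ∀ g, φ g ∈ H) (hφ : ∀ h ∈ H, φ h = h) (A : Set G)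
    (hA : ∀ a ∈ A, ∀ h ∈ H, a * h ∈ A) :
    Nat.card A = Nat.card H * Nat.card {g | g ∈ φ.ker ∧ g ∈ A} := by
  have hker : ∀ g, g * (φ g)⁻¹ ∈ φ.ker := fun g => by simp [hφ _ (hφH g)]
  rw [← Nat.card_prod]
  refine Nat.card_congr
    { toFun := fun a => (⟨φ a, hφH a⟩, ⟨a * (φ a)⁻¹, hker a, hA a a.2 _ (H.inv_mem (hφH a))⟩)
      invFun := fun q => ⟨q.2.1 * q.1.1, hA _ q.2.2.2 _ q.1.2⟩
      left_inv := fun a => by simp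
      right_inv := ?_ }
  rintro ⟨⟨h, hh⟩, ⟨u, hu, huA⟩⟩
  have hφuh : φ (u * h) = h := by rw [map_mul, φ.mem_ker.1 hu, one_mul, hφ h hh]
  simp [hφuh]

namespace CoxeterSystem

variable {B W : Type*} [Group W] {M : CoxeterMatrix B} (cs : CoxeterSystem M W)

theorem prod_map_alternatingWord_reverse {G : Type*} [Monoid G] (f : B → G)
    (i j : B) (n : ℕ) :
    ((alternatingWord j i (2 * n)).reverse.map f).prod = (f i * f j) ^ n := by
  induction n with
  | zero => simp [alternatingWord]
  | succ n ih =>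
    rw [show 2 * (n + 1) = 2 * n + 1 + 1 by ring, alternatingWord_succ', alternatingWord_succ']
    simp only [List.reverse_cons, List.map_append, List.prod_append, ih]
    simp [pow_succ, mul_assoc]

section ReflectionCocycle

variable [DecidableEq W]

/-- Tits' construction: these maps descend to an action of `W`, which is what makes the set of
reflections in the right inversion sequence of a reduced word depend only on its product. -/
def reflectionAct (i : B) : Function.End (W × ZMod 2) :=
  fun q => (cs.simple i * q.1 * cs.simple i, q.2 + if q.1 = cs.simple i then 1 else 0)

theorem prod_map_reflectionAct_apply (ω : List B) (t : W) (ε : ZMod 2) :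
    (ω.map cs.reflectionAct).prod (t, ε) =
      (cs.wordProd ω * t * (cs.wordProd ω)⁻¹, ε + ((cs.rightInvSeq ω).count t : ZMod 2)) := by
  induction ω with
  | nil =>
    show (t, ε) = _
    simp
  | cons i ω ih =>
    have hcond : (cs.wordProd ω)⁻¹ * cs.simple i * cs.wordProd ω = t ↔
        cs.wordProd ω * t * (cs.wordProd ω)⁻¹ = cs.simple i := by
      constructor <;> intro h <;> rw [← h] <;> group
    show cs.reflectionAct i ((ω.map cs.reflectionAct).prod (t, ε)) = _
    rw [ih]
    refine Prod.ext ?_ ?_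
    · simp only [reflectionAct, wordProd_cons, mul_inv_rev, inv_simple]
      group
    · simp only [reflectionAct, rightInvSeq, List.count_cons, beq_iff_eq, hcond]
      push_cast
      ring

theorem even_count_leftInvSeq_alternatingWord (i j : B) (t : W) :
    Even ((cs.leftInvSeq (alternatingWord j i (2 * M i j))).count t) := by
  set f : ℕ → W := fun k => cs.simple j * (cs.simple i * cs.simple j) ^ k
  have hlis : cs.leftInvSeq (alternatingWord j i (2 * M i j)) =
      (List.range (M i j + M i j)).map f := by
    refine List.ext_getElem (by simp [two_mul]) fun k hk _ => ?_
    rw [getElem_leftInvSeq_alternatingWord cs j i _ k (by simpa using hk),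
      prod_alternatingWord_eq_mul_pow]
    simp [f, Nat.not_even_bit1, Nat.add_div_of_dvd_right]
  have hper : (fun k => f (M i j + k)) = f := by
    funext k
    simp [f, pow_add, cs.simple_mul_simple_pow]
  rw [hlis, List.range_add, List.map_append, List.map_map, Function.comp_def, hper,
    List.count_append]
  exact ⟨_, rfl⟩

theorem isLiftable_reflectionAct : M.IsLiftable cs.reflectionAct := by
  intro i j
  funext ⟨t, ε⟩
  rw [← prod_map_alternatingWord_reverse, prod_map_reflectionAct_apply, wordProd_reverse,
    rightInvSeq_reverse, List.count_reverse,
    (ZMod.natCast_eq_zero_iff_even).2 (cs.even_count_leftInvSeq_alternatingWord i j t),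
    prod_alternatingWord_eq_mul_pow]
  show _ = (t, ε)
  simp

def reflectionHom : W →* Function.End (W × ZMod 2) :=
  cs.lift ⟨cs.reflectionAct, cs.isLiftable_reflectionAct⟩

theorem reflectionHom_wordProd (ω : List B) :
    cs.reflectionHom (cs.wordProd ω) = (ω.map cs.reflectionAct).prod := by
  simp [reflectionHom, wordProd, map_list_prod, Function.comp_def]

theorem natCast_count_rightInvSeq_eq {ω ω' : List B} (h : cs.wordProd ω = cs.wordProd ω')
    (t : W) : ((cs.rightInvSeq ω).count t : ZMod 2) = (cs.rightInvSeq ω').count t := by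
  have := congrArg (fun g => (cs.reflectionHom g (t, 0)).2) h
  simpa [reflectionHom_wordProd, prod_map_reflectionAct_apply] using this

end ReflectionCocycle

variable {cs} in
theorem IsReduced.perm_rightInvSeq {ω ω' : List B} (hω : cs.IsReduced ω) (hω' : cs.IsReduced ω')
    (h : cs.wordProd ω = cs.wordProd ω') : (cs.rightInvSeq ω).Perm (cs.rightInvSeq ω') := by
  classical
  refine (List.perm_ext_iff_of_nodup hω.nodup_rightInvSeq hω'.nodup_rightInvSeq).2 fun t => ?_
  have hcount := cs.natCast_count_rightInvSeq_eq h t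
  rw [hω.nodup_rightInvSeq.count, hω'.nodup_rightInvSeq.count] at hcount
  by_cases ht : t ∈ cs.rightInvSeq ω <;> by_cases ht' : t ∈ cs.rightInvSeq ω' <;>
    simp_all

section LetterCount

def IsConjClosed (P : B → Prop) : Prop :=
  ∀ i j, IsConj (cs.simple i) (cs.simple j) → P i → P j

variable {cs} {P : B → Prop} [DecidablePred P]

open Classical in
theorem IsConjClosed.countP_rightInvSeq (hP : cs.IsConjClosed P) (ω : List B) :
    (cs.rightInvSeq ω).countP (fun t => ∃ j, P j ∧ IsConj (cs.simple j) t) = ω.countP P := by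
  induction ω with
  | nil => rfl
  | cons i ω ih =>
    have hconj : IsConj (cs.simple i) ((cs.wordProd ω)⁻¹ * cs.simple i * cs.wordProd ω) :=
      isConj_iff.2 ⟨(cs.wordProd ω)⁻¹, by group⟩
    have hiff : (∃ j, P j ∧ IsConj (cs.simple j)
        ((cs.wordProd ω)⁻¹ * cs.simple i * cs.wordProd ω)) ↔ P i :=
      ⟨fun ⟨j, hj, hc⟩ => hP j i (hc.trans hconj.symm) hj, fun hi => ⟨i, hi, hconj⟩⟩
    simp only [rightInvSeq, List.countP_cons, ih, hiff]

theorem IsConjClosed.countP_eq_of_wordProd_eq (hP : cs.IsConjClosed P) {ω ω' : List B}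
    (hω : cs.IsReduced ω) (hω' : cs.IsReduced ω') (h : cs.wordProd ω = cs.wordProd ω') :
    ω.countP P = ω'.countP P := by
  classical
  rw [← hP.countP_rightInvSeq, ← hP.countP_rightInvSeq]
  exact (hω.perm_rightInvSeq hω' h).countP_eq _

variable (cs) in
/-- The paper's `ℓ_{S₀}` for `S₀ = {i | P i}`. -/
noncomputable def letterCount (P : B → Prop) [DecidablePred P] (w : W) : ℕ :=
  (cs.exists_isReduced w).choose.countP P

theorem IsConjClosed.letterCount_wordProd (hP : cs.IsConjClosed P) {ω : List B}
    (hω : cs.IsReduced ω) : cs.letterCount P (cs.wordProd ω) = ω.countP P :=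
  have h := (cs.exists_isReduced (cs.wordProd ω)).choose_spec
  hP.countP_eq_of_wordProd_eq h.1 hω h.2.symm

theorem IsConjClosed.letterCount_mul_simple (hP : cs.IsConjClosed P) {k : B} (hk : ¬P k)
    (w : W) : cs.letterCount P (w * cs.simple k) = cs.letterCount P w := by
  have ascent : ∀ u, cs.length (u * cs.simple k) = cs.length u + 1 →
      cs.letterCount P (u * cs.simple k) = cs.letterCount P u := by
    intro u hu
    obtain ⟨ω, hω, rfl⟩ := cs.exists_isReduced u
    have hred : cs.IsReduced (ω ++ [k]) := by
      simp [IsReduced, wordProd_append, hu, hω.eq]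
    rw [← wordProd_singleton, ← wordProd_append, hP.letterCount_wordProd hred,
      hP.letterCount_wordProd hω]
    simp [hk]
  rcases cs.length_mul_simple w k with h | h
  · exact ascent w h
  · have := ascent (w * cs.simple k) (by rw [simple_mul_simple_cancel_right]; omega)
    rw [simple_mul_simple_cancel_right] at this
    exact this.symm

theorem IsConjClosed.letterCount_mul_of_mem_closure (hP : cs.IsConjClosed P) {v : W}
    (hv : v ∈ Subgroup.closure (cs.simple '' {k | ¬P k})) (w : W) :
    cs.letterCount P (w * v) = cs.letterCount P w := by
  induction hv using Subgroup.closure_induction generalizing w with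
  | mem g hg =>
    obtain ⟨k, hk, rfl⟩ := hg
    exact hP.letterCount_mul_simple hk w
  | one => rw [mul_one]
  | mul a b _ _ ha hb => rw [← mul_assoc, hb, ha]
  | inv a _ ha => rw [← ha (w * a⁻¹), inv_mul_cancel_right]

theorem IsConjClosed.countP_eq_of_wordProd_eq_mul (hP : cs.IsConjClosed P) {v : W}
    (hv : v ∈ Subgroup.closure (cs.simple '' {k | ¬P k})) {ω ω' : List B}
    (hω : cs.IsReduced ω) (hω' : cs.IsReduced ω') (h : cs.wordProd ω' = cs.wordProd ω * v) :
    ω'.countP P = ω.countP P := by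
  rw [← hP.letterCount_wordProd hω', h, hP.letterCount_mul_of_mem_closure hv,
    hP.letterCount_wordProd hω]

end LetterCount

section LengthBound

variable {cs}

theorem wordProd_mem_closure {S₀ : Set B} {ω : List B} (h : ∀ i ∈ ω, i ∈ S₀) :
    cs.wordProd ω ∈ Subgroup.closure (cs.simple '' S₀) :=
  Subgroup.list_prod_mem _ fun _ hg =>
    have ⟨i, hi, hig⟩ := List.mem_map.1 hg
    Subgroup.subset_closure ⟨i, h i hi, hig⟩

theorem IsReduced.length_lt_card {S₀ : Set B}
    (hfin : (Subgroup.closure (cs.simple '' S₀) : Set W).Finite) {ω : List B}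
    (hω : cs.IsReduced ω) (h : ∀ i ∈ ω, i ∈ S₀) :
    ω.length < Nat.card (Subgroup.closure (cs.simple '' S₀)) := by
  have : Finite (Subgroup.closure (cs.simple '' S₀)) := hfin.to_subtype
  let prefixProd : Fin (ω.length + 1) → Subgroup.closure (cs.simple '' S₀) := fun r =>
    ⟨cs.wordProd (ω.take r), wordProd_mem_closure fun i hi => h i (List.mem_of_mem_take hi)⟩
  have hinj : Function.Injective prefixProd := by
    intro r r' hrr'
    have := congrArg (fun g => cs.length g.1) hrr'
    simp only [prefixProd, (hω.take _).eq, List.length_take] at this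
    omega
  simpa using Nat.card_le_card_of_injective prefixProd hinj

variable {P : B → Prop} [DecidablePred P]

/-- Each maximal run of letters outside `P` is a reduced word in the finite group `W_{¬P}`, so it
is shorter than `#W_{¬P}`; the `P`-letters cut a reduced word into `countP P + 1` such runs. -/
theorem IsReduced.length_lt_card_mul
    (hfin : (Subgroup.closure (cs.simple '' {i | ¬P i}) : Set W).Finite) {ω : List B}
    (hω : cs.IsReduced ω) :
    ω.length < Nat.card (Subgroup.closure (cs.simple '' {i | ¬P i})) * (ω.countP P + 1) := by
  set N := Nat.card (Subgroup.closure (cs.simple '' {i | ¬P i}))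
  suffices ∀ ρ : List B, cs.IsReduced (ρ ++ ω) → (∀ i ∈ ρ, ¬P i) →
      (ρ ++ ω).length < N * (ω.countP P + 1) from this [] hω (by simp)
  clear hω
  induction ω with
  | nil =>
    intro ρ hρ hρP
    simpa using (List.append_nil ρ ▸ hρ).length_lt_card hfin hρP
  | cons i ω ih =>
    intro ρ hred hρP
    by_cases hi : P i
    · have hρ : ρ.length < N := by
        have := hred.take ρ.length
        rw [List.take_left] at this
        exact this.length_lt_card hfin hρP
      have hω : ω.length < N * (ω.countP P + 1) := by
        have := hred.drop (ρ.length + 1)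
        rw [← List.drop_drop, List.drop_left] at this
        exact ih [] this (by simp)
      simp only [List.countP_cons, hi, decide_true, if_true, List.length_append,
        List.length_cons]
      nlinarith
    · have := ih (ρ ++ [i]) (by simpa using hred) (by simpa [or_imp, forall_and, hi] using hρP)
      simpa [hi] using this

theorem finite_setOf_countP_eq [Finite B]
    (hfin : (Subgroup.closure (cs.simple '' {i | ¬P i}) : Set W).Finite) (n : ℕ) :
    {w : W | ∃ ω, cs.IsReduced ω ∧ cs.wordProd ω = w ∧ ω.countP P = n}.Finite := by
  refine ((List.finite_length_le B
    (Nat.card (Subgroup.closure (cs.simple '' {i | ¬P i})) * (n + 1))).image cs.wordProd).subset ?_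
  rintro _ ⟨ω, hω, rfl, rfl⟩
  exact ⟨ω, (hω.length_lt_card_mul hfin).le, rfl⟩

end LengthBound

section Fibers

variable {cs} {I : Type*} [DecidableEq I] (p : B → I) (x₀ : I)

theorem finite_setOf_countP_fiber_eq [Finite B]
    (hfin : (Subgroup.closure (cs.simple '' {i | p i = x₀}) : Set W).Finite) (d : I → ℕ) :
    {w : W | ∀ ω : List B, cs.IsReduced ω → cs.wordProd ω = w →
      ∀ x : I, x ≠ x₀ → ω.countP (fun i => decide (p i = x)) = d x}.Finite := by
  set xs := (Set.finite_range p).toFinset.erase x₀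
  refine (finite_setOf_countP_eq (P := (p · ≠ x₀)) (by simpa using hfin) (∑ x ∈ xs, d x)).subset ?_
  intro w hw
  obtain ⟨ω, hω, rfl⟩ := cs.exists_isReduced w
  refine ⟨ω, hω, rfl, ?_⟩
  have hxs : ∀ i, p i ≠ x₀ ↔ p i ∈ xs := fun i => by simp [xs]
  simp only [hxs, List.countP_mem_eq_sum_countP]
  exact Finset.sum_congr rfl fun x hx => hw ω hω rfl x (Finset.ne_of_mem_erase hx)

theorem mul_mem_setOf_countP_fiber_eq
    (hallow : ∀ s s' : B, IsConj (cs.simple s) (cs.simple s') → p s = p s') (d : I → ℕ)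
    {w : W} (hw : w ∈ {w : W | ∀ ω : List B, cs.IsReduced ω → cs.wordProd ω = w →
      ∀ x : I, x ≠ x₀ → ω.countP (fun i => decide (p i = x)) = d x})
    {v : W} (hv : v ∈ Subgroup.closure (cs.simple '' {i | p i = x₀})) :
    w * v ∈ {w : W | ∀ ω : List B, cs.IsReduced ω → cs.wordProd ω = w →
      ∀ x : I, x ≠ x₀ → ω.countP (fun i => decide (p i = x)) = d x} := by
  intro ω hω hωv x hx
  have hP : cs.IsConjClosed (p · = x) := fun i j h hi => (hallow i j h).symm.trans hi
  have hv' : v ∈ Subgroup.closure (cs.simple '' {k | ¬p k = x}) := by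
    refine Subgroup.closure_mono (Set.image_mono ?_) hv
    intro k (hk : p k = x₀) (hkx : p k = x)
    exact hx (hkx.symm.trans hk)
  obtain ⟨ω', hω', rfl⟩ := cs.exists_isReduced w
  rw [hP.countP_eq_of_wordProd_eq_mul hv' hω' hω hωv]
  exact hw ω' hω' rfl x hx

theorem apply_mem_closure_simple_compl {T : Set B} {φ : W →* W}
    (hφ₁ : ∀ s ∉ T, φ (cs.simple s) = cs.simple s) (hφ₂ : ∀ t ∈ T, φ (cs.simple t) = 1)
    (g : W) : φ g ∈ Subgroup.closure (cs.simple '' Tᶜ) := by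
  induction g using cs.simple_induction with
  | simple i =>
    by_cases hi : i ∈ T
    · rw [hφ₂ i hi]
      exact Subgroup.one_mem _
    · rw [hφ₁ i hi]
      exact Subgroup.subset_closure ⟨i, hi, rfl⟩
  | one => rw [map_one]; exact Subgroup.one_mem _
  | mul g₁ g₂ h₁ h₂ => rw [map_mul]; exact Subgroup.mul_mem _ h₁ h₂

end Fibers

end CoxeterSystem

open CoxeterSystem in
theorem growth_specialization_general {B W I : Type*} [Group W] [Finite B] [DecidableEq I]
    (M : CoxeterMatrix B) (cs : CoxeterSystem M W) (T : Set B)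
    (hfin : (Subgroup.closure (cs.simple '' Tᶜ) : Set W).Finite)
    (φ : W →* W)
    (hφ₁ : ∀ s ∉ T, φ (cs.simple s) = cs.simple s)
    (hφ₂ : ∀ t ∈ T, φ (cs.simple t) = 1)
    (p : B → I) (x₀ : I)
    (hallow : ∀ s s' : B, IsConj (cs.simple s) (cs.simple s') → p s = p s')
    (hfiber : {s : B | p s = x₀} = Tᶜ)
    (d : I → ℕ) :
    {w : W | ∀ ω : List B, cs.IsReduced ω → cs.wordProd ω = w →
        ∀ x : I, x ≠ x₀ → ω.countP (fun i => decide (p i = x)) = d x}.Finite ∧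
    Nat.card {w : W | ∀ ω : List B, cs.IsReduced ω → cs.wordProd ω = w →
        ∀ x : I, x ≠ x₀ → ω.countP (fun i => decide (p i = x)) = d x} =
      Nat.card (Subgroup.closure (cs.simple '' Tᶜ)) *
      Nat.card {u : W | u ∈ φ.ker ∧ ∀ ω : List B, cs.IsReduced ω → cs.wordProd ω = u →
        ∀ x : I, x ≠ x₀ → ω.countP (fun i => decide (p i = x)) = d x} := by
  rw [← hfiber] at hfin ⊢
  have hφ : ∀ v ∈ Subgroup.closure (cs.simple '' {s | p s = x₀}), φ v = v :=
    MonoidHom.eqOn_closure (g := MonoidHom.id W) (by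
      rintro _ ⟨i, hi, rfl⟩
      exact hφ₁ i (by rwa [← Set.mem_compl_iff, ← hfiber]))
  refine ⟨finite_setOf_countP_fiber_eq p x₀ hfin d,
    φ.card_eq_card_mul_card_ker_inter _ ?_ hφ _
      fun w hw v hv => mul_mem_setOf_countP_fiber_eq p x₀ hallow d hw hv⟩
  simpa [hfiber] using apply_mem_closure_simple_compl hφ₁ hφ₂

/-- Let `S` be finite, `T ⊆ S` satisfy the evenness assumption, and suppose `W_{S∖T}` is finite.
Let `p : S → I` be an allowable partition (fibers closed under conjugacy of generators) with
`p⁻¹(x₀) = S∖T`. Then for every `d : I → ℕ`, the set of `w ∈ W` whose reduced words contain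
exactly `d x` letters from the fiber `p⁻¹(x)` for every `x ≠ x₀` is finite, and its cardinality
is `#W_{S∖T}` times the cardinality of the corresponding subset of `ker φ_T`. -/
theorem growth_specialization {B W I : Type*} [Group W] [Finite B] [DecidableEq I]
    (M : CoxeterMatrix B) (cs : CoxeterSystem M W) (T : Set B)
    (heven : ∀ t ∈ T, ∀ s ∉ T, Even (M t s))
    (hfin : (Subgroup.closure (cs.simple '' Tᶜ) : Set W).Finite)
    (φ : W →* W)
    (hφ₁ : ∀ s ∉ T, φ (cs.simple s) = cs.simple s)
    (hφ₂ : ∀ t ∈ T, φ (cs.simple t) = 1)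
    (p : B → I) (x₀ : I)
    (hallow : ∀ s s' : B, IsConj (cs.simple s) (cs.simple s') → p s = p s')
    (hfiber : {s : B | p s = x₀} = Tᶜ)
    (d : I → ℕ) :
    {w : W | ∀ ω : List B, cs.IsReduced ω → cs.wordProd ω = w →
        ∀ x : I, x ≠ x₀ → ω.countP (fun i => decide (p i = x)) = d x}.Finite ∧
    Nat.card {w : W | ∀ ω : List B, cs.IsReduced ω → cs.wordProd ω = w →
        ∀ x : I, x ≠ x₀ → ω.countP (fun i => decide (p i = x)) = d x} =
      Nat.card (Subgroup.closure (cs.simple '' Tᶜ)) *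
      Nat.card {u : W | u ∈ φ.ker ∧ ∀ ω : List B, cs.IsReduced ω → cs.wordProd ω = u →
        ∀ x : I, x ≠ x₀ → ω.countP (fun i => decide (p i = x)) = d x} :=
  growth_specialization_general M cs T hfin φ hφ₁ hφ₂ p x₀ hallow hfiber d
end
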